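/- arXiv:1310.2032 — 7 statements merged into one kernel-verified Lean document; each statement's English description precedes it below -/
import Mathlib

section
/- The power graph of a finite group G is complete if and only if G is cyclic of order 1 or p^m for some prime p and natural number m. -/
def powerGraph (G : Type*) [Group G] : SimpleGraph G where
  Adj x y := x ≠ y ∧ ((∃ m : ℕ, 0 < m ∧ y = x ^ m) ∨ (∃ m : ℕ, 0 < m ∧ x = y ^ m))
  symm := ⟨fun x y h => ⟨h.1.symm, h.2.symm⟩⟩
  loopless := ⟨fun x h => h.1 rfl⟩

def powerGraphStar (G : Type*) [Group G] : SimpleGraph {g : G // g ≠ 1} :=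
  (powerGraph G).induce {g : G | g ≠ 1}

/-!
In a finite group, `x` and `y` are adjacent in the power graph exactly when one lies in the cyclic
subgroup generated by the other, so the power graph is complete iff the cyclic subgroups form a
chain. A finite chain of cyclic subgroups has a largest member, which must then be the whole group;
and elements of two distinct prime orders `p`, `q` (Cauchy) would be incomparable, so `|G|` is a
prime power. Conversely, in a cyclic group `x ∈ ⟨y⟩` as soon as `orderOf x ∣ orderOf y`, and in a
group of order `p ^ m` any two element orders are comparable under divisibility.
-/

open Subgroup

section

variable {G : Type*} [Group G]

theorem exists_pos_pow_eq_iff_mem_zpowers [Finite G] {x y : G} :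
    (∃ m : ℕ, 0 < m ∧ y = x ^ m) ↔ y ∈ zpowers x := by
  refine ⟨fun ⟨m, _, hy⟩ ↦ hy ▸ npow_mem_zpowers x m, fun hy ↦ ?_⟩
  obtain ⟨m, rfl⟩ := (isOfFinOrder_of_finite x).mem_powers_iff_mem_zpowers.2 hy
  rcases Nat.eq_zero_or_pos m with rfl | hm
  · exact ⟨orderOf x, orderOf_pos x, by simp⟩
  · exact ⟨m, hm, rfl⟩

theorem powerGraph_adj_iff [Finite G] {x y : G} :
    (powerGraph G).Adj x y ↔ x ≠ y ∧ (y ∈ zpowers x ∨ x ∈ zpowers y) := by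
  simp only [powerGraph, exists_pos_pow_eq_iff_mem_zpowers]

theorem powerGraph_eq_top_iff [Finite G] :
    powerGraph G = ⊤ ↔ ∀ x y : G, y ∈ zpowers x ∨ x ∈ zpowers y := by
  refine ⟨fun h x y ↦ ?_, fun h ↦ ?_⟩
  · by_cases hxy : x = y
    · exact Or.inl (hxy ▸ mem_zpowers x)
    · have hadj : (powerGraph G).Adj x y := h ▸ hxy
      exact (powerGraph_adj_iff.1 hadj).2
  · ext x y
    simpa [powerGraph_adj_iff] using fun _ ↦ h x y

theorem isCyclic_of_forall_mem_zpowers_or [Finite G]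
    (h : ∀ x y : G, y ∈ zpowers x ∨ x ∈ zpowers y) : IsCyclic G := by
  obtain ⟨g, hg⟩ := Finite.exists_max (orderOf : G → ℕ)
  refine ⟨g, fun x ↦ ?_⟩
  show x ∈ zpowers g
  refine (h g x).elim id fun hgx ↦ ?_
  have hle : zpowers g ≤ zpowers x := zpowers_le.2 hgx
  have heq : zpowers g = zpowers x :=
    eq_of_le_of_card_ge hle (by simpa only [Nat.card_zpowers] using hg x)
  exact heq ▸ mem_zpowers x

theorem eq_of_prime_dvd_card_of_forall_mem_zpowers_or [Finite G]
    (h : ∀ x y : G, y ∈ zpowers x ∨ x ∈ zpowers y) {p q : ℕ} (hp : p.Prime) (hq : q.Prime)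
    (hpG : p ∣ Nat.card G) (hqG : q ∣ Nat.card G) : p = q := by
  have := Fact.mk hp
  have := Fact.mk hq
  obtain ⟨x, rfl⟩ := exists_prime_orderOf_dvd_card' p hpG
  obtain ⟨y, rfl⟩ := exists_prime_orderOf_dvd_card' q hqG
  rcases h x y with hyx | hxy
  · exact ((Nat.prime_dvd_prime_iff_eq hq hp).1 (orderOf_dvd_of_mem_zpowers hyx)).symm
  · exact (Nat.prime_dvd_prime_iff_eq hp hq).1 (orderOf_dvd_of_mem_zpowers hxy)

theorem exists_card_eq_prime_pow_of_forall_mem_zpowers_or [Finite G]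
    (h : ∀ x y : G, y ∈ zpowers x ∨ x ∈ zpowers y) : ∃ p m : ℕ, p.Prime ∧ Nat.card G = p ^ m := by
  by_cases h1 : Nat.card G = 1
  · exact ⟨2, 0, Nat.prime_two, h1⟩
  have hp := Nat.minFac_prime h1
  exact ⟨_, _, hp, Nat.eq_prime_pow_of_unique_prime_dvd Nat.card_pos.ne' fun hq hqG ↦
    eq_of_prime_dvd_card_of_forall_mem_zpowers_or h hq hp hqG (Nat.minFac_dvd _)⟩

open Finset in
theorem IsCyclic.mem_zpowers_of_orderOf_dvd [Finite G] [IsCyclic G] {x y : G}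
    (h : orderOf x ∣ orderOf y) : x ∈ zpowers y := by
  classical
  have := Fintype.ofFinite G
  -- `zpowers y` has `orderOf y` elements, and a cyclic group has at most that many
  -- solutions of `z ^ orderOf y = 1`
  let S : Finset G := {z | z ^ orderOf y = 1}
  have hsub : (zpowers y : Set G).toFinset ⊆ S := by
    intro z hz
    obtain ⟨k, rfl⟩ := mem_zpowers_iff.1 (Set.mem_toFinset.1 hz)
    simp only [S, Finset.mem_filter, Finset.mem_univ, true_and]
    rw [← zpow_natCast, ← zpow_mul, mul_comm, zpow_mul, zpow_natCast, pow_orderOf_eq_one, one_zpow]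
  have hcard : #S ≤ #(zpowers y : Set G).toFinset := by
    rw [Set.toFinset_card, ← Nat.card_eq_fintype_card, SetLike.coe_sort_coe, Nat.card_zpowers]
    exact IsCyclic.card_pow_eq_one_le (orderOf_pos y)
  have hx : x ∈ S := by
    simpa [S] using orderOf_dvd_iff_pow_eq_one.1 h
  rwa [← Finset.eq_of_subset_of_card_le hsub hcard, Set.mem_toFinset] at hx

theorem IsCyclic.mem_zpowers_or_of_card_eq_prime_pow [Finite G] [IsCyclic G] {p m : ℕ}
    (hp : p.Prime) (hG : Nat.card G = p ^ m) (x y : G) : y ∈ zpowers x ∨ x ∈ zpowers y := by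
  obtain ⟨i, -, hi⟩ := (Nat.dvd_prime_pow hp).1 (hG ▸ orderOf_dvd_natCard x)
  obtain ⟨j, -, hj⟩ := (Nat.dvd_prime_pow hp).1 (hG ▸ orderOf_dvd_natCard y)
  rcases le_total i j with hij | hji
  · exact Or.inr (mem_zpowers_of_orderOf_dvd (hi ▸ hj ▸ pow_dvd_pow p hij))
  · exact Or.inl (mem_zpowers_of_orderOf_dvd (hi ▸ hj ▸ pow_dvd_pow p hji))

end

theorem powerGraph_complete_iff (G : Type*) [Group G] [Fintype G] :
    powerGraph G = ⊤ ↔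
      IsCyclic G ∧ (Fintype.card G = 1 ∨
        ∃ p m : ℕ, p.Prime ∧ Fintype.card G = p ^ m) := by
  simp only [powerGraph_eq_top_iff, ← Nat.card_eq_fintype_card]
  refine ⟨fun h ↦ ⟨isCyclic_of_forall_mem_zpowers_or h,
    Or.inr (exists_card_eq_prime_pow_of_forall_mem_zpowers_or h)⟩, ?_⟩
  rintro ⟨hcyc, h1 | ⟨p, m, hp, hG⟩⟩
  · exact IsCyclic.mem_zpowers_or_of_card_eq_prime_pow Nat.prime_two (h1.trans (pow_zero 2).symm)
  · exact IsCyclic.mem_zpowers_or_of_card_eq_prime_pow hp hG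
end

section
/- Let a and b be commuting elements of a group G such that neither o(a) divides o(b) nor o(b) divides o(a). Then a and b lie in the same connected component of the graph P*(G) obtained from the power graph of G by deleting the identity vertex. -/
theorem Nat.exists_prime_dvd_factorization_lt_of_not_dvd {m n : ℕ} (hm : m ≠ 0) (hn : n ≠ 0)
    (h : ¬ m ∣ n) : ∃ p : ℕ, p.Prime ∧ p ∣ m ∧ n.factorization p < m.factorization p := by
  rw [← Nat.factorization_le_iff_dvd hm hn, Finsupp.le_def] at h
  push Not at h
  obtain ⟨p, hp⟩ := h
  have hpos : m.factorization p ≠ 0 := by omega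
  exact ⟨p, Nat.prime_of_mem_primeFactors (Finsupp.mem_support_iff.mpr hpos),
    Nat.dvd_of_factorization_pos hpos, hp⟩

theorem Nat.exists_primes_ne_dvd_of_not_dvd_of_not_dvd {m n : ℕ} (hm : m ≠ 0) (hn : n ≠ 0)
    (hmn : ¬ m ∣ n) (hnm : ¬ n ∣ m) :
    ∃ p q : ℕ, p.Prime ∧ q.Prime ∧ p ≠ q ∧ p ∣ m ∧ q ∣ n := by
  obtain ⟨p, hp, hpm, hp_lt⟩ := exists_prime_dvd_factorization_lt_of_not_dvd hm hn hmn
  obtain ⟨q, hq, hqn, hq_lt⟩ := exists_prime_dvd_factorization_lt_of_not_dvd hn hm hnm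
  refine ⟨p, q, hp, hq, ?_, hpm, hqn⟩
  rintro rfl
  omega

theorem Commute.exists_pow_mul_eq_left {G : Type*} [Group G] {x y : G} (h : Commute x y)
    (hco : (orderOf x).Coprime (orderOf y)) : ∃ m : ℕ, (x * y) ^ m = x := by
  obtain ⟨m, hm⟩ := exists_pow_eq_self_of_coprime hco.symm
  exact ⟨orderOf y * m, by rw [pow_mul, h.mul_pow, pow_orderOf_eq_one, mul_one, hm]⟩

section PowerGraphStar

variable {G : Type*} [Group G]

theorem powerGraphStar_reachable_of_pow_eq {x y : G} (hx : x ≠ 1) (hy : y ≠ 1) {m : ℕ}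
    (h : x ^ m = y) : (powerGraphStar G).Reachable ⟨x, hx⟩ ⟨y, hy⟩ := by
  rcases eq_or_ne x y with rfl | hxy
  · rfl
  have hm : 0 < m := Nat.pos_of_ne_zero <| by
    rintro rfl
    exact hy (h ▸ pow_zero x)
  exact SimpleGraph.Adj.reachable (show (powerGraph G).Adj x y from
    ⟨hxy, Or.inl ⟨m, hm, h.symm⟩⟩)

theorem powerGraphStar_reachable_of_commute_of_coprime {x y : G} (hx : x ≠ 1) (hy : y ≠ 1)
    (h : Commute x y) (hco : (orderOf x).Coprime (orderOf y)) :
    (powerGraphStar G).Reachable ⟨x, hx⟩ ⟨y, hy⟩ := by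
  obtain ⟨m, hm⟩ := h.exists_pow_mul_eq_left hco
  obtain ⟨n, hn⟩ := h.symm.exists_pow_mul_eq_left hco.symm
  rw [← h.eq] at hn
  have hxy : x * y ≠ 1 := fun h1 => hx (by rw [← hm, h1, one_pow])
  exact (powerGraphStar_reachable_of_pow_eq hxy hx hm).symm.trans
    (powerGraphStar_reachable_of_pow_eq hxy hy hn)

end PowerGraphStar

theorem commuting_incomparable_orders_same_component (G : Type*) [Group G] [Fintype G]
    (a b : G) (ha : a ≠ 1) (hb : b ≠ 1) (hcomm : a * b = b * a)
    (hab : ¬ orderOf a ∣ orderOf b) (hba : ¬ orderOf b ∣ orderOf a) :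
    (powerGraphStar G).Reachable ⟨a, ha⟩ ⟨b, hb⟩ := by
  obtain ⟨p, q, hp, hq, hpq, hpa, hqb⟩ := Nat.exists_primes_ne_dvd_of_not_dvd_of_not_dvd
    (orderOf_pos a).ne' (orderOf_pos b).ne' hab hba
  set u := a ^ (orderOf a / p)
  set v := b ^ (orderOf b / q)
  have hu : orderOf u = p := orderOf_pow_orderOf_div (orderOf_pos a).ne' hpa
  have hv : orderOf v = q := orderOf_pow_orderOf_div (orderOf_pos b).ne' hqb
  have hu1 : u ≠ 1 := fun h => hp.ne_one (by rw [← hu, h, orderOf_one])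
  have hv1 : v ≠ 1 := fun h => hq.ne_one (by rw [← hv, h, orderOf_one])
  have huv : (powerGraphStar G).Reachable ⟨u, hu1⟩ ⟨v, hv1⟩ :=
    powerGraphStar_reachable_of_commute_of_coprime hu1 hv1 (Commute.pow_pow hcomm _ _)
      (hu ▸ hv ▸ (Nat.coprime_primes hp hq).mpr hpq)
  exact ((powerGraphStar_reachable_of_pow_eq ha hu1 rfl).trans huv).trans
    (powerGraphStar_reachable_of_pow_eq hb hv1 rfl).symm
end

section
/- Let G be a finite p-group. Then the graph P*(G), obtained from the power graph of G by deleting the identity, is connected if and only if G has a unique minimal subgroup. -/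
namespace Subgroup

variable {G : Type*} [Group G]

theorem mem_zpowers_pow_orderOf_div_of_pow_eq_one {a z : G} {n : ℕ} (ha : IsOfFinOrder a)
    (hn : n ∣ orderOf a) (hz : z ∈ zpowers a) (hzn : z ^ n = 1) :
    z ∈ zpowers (a ^ (orderOf a / n)) := by
  obtain ⟨m, rfl⟩ := Submonoid.mem_powers_iff _ _ |>.mp (ha.mem_powers_iff_mem_zpowers.mpr hz)
  have hdvd : orderOf a / n * n ∣ m * n := by
    rw [Nat.div_mul_cancel hn]
    exact orderOf_dvd_of_pow_eq_one (by rwa [pow_mul])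
  obtain ⟨k, rfl⟩ := Nat.dvd_of_mul_dvd_mul_right (Nat.pos_of_dvd_of_pos hn ha.orderOf_pos) hdvd
  exact pow_mul a _ k ▸ npow_mem_zpowers _ k

theorem minimal_zpowers_of_orderOf_prime {z : G} (hz : (orderOf z).Prime) :
    Minimal (fun K : Subgroup G => K ≠ ⊥) (zpowers z) := by
  have : Finite (zpowers z) :=
    Nat.finite_of_card_ne_zero (by rw [Nat.card_zpowers]; exact hz.ne_zero)
  refine ⟨?_, fun K hK hle => ?_⟩
  · refine zpowers_ne_bot.mpr ?_
    rintro rfl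
    exact Nat.not_prime_one (orderOf_one (G := G) ▸ hz)
  · have hcard : Nat.card K ∣ orderOf z := Nat.card_zpowers z ▸ card_dvd_of_le hle
    rcases hz.eq_one_or_self_of_dvd _ hcard with h | h
    · exact absurd (card_eq_one.mp h) hK
    · exact (eq_of_le_of_card_ge hle (by rw [Nat.card_zpowers, h])).ge

theorem eq_zpowers_of_minimal {K : Subgroup G} (hK : Minimal (fun K : Subgroup G => K ≠ ⊥) K)
    {k : G} (hk : k ∈ K) (hk1 : k ≠ 1) : K = zpowers k :=
  (hK.eq_of_le (zpowers_ne_bot.mpr hk1) (zpowers_le.mpr hk)).symm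

end Subgroup

open Subgroup

namespace IsPGroup

variable {p : ℕ} [Fact p.Prime] {G : Type*} [Group G]

theorem orderOf_pow_orderOf_div (hG : IsPGroup p G) {a : G} (ha : a ≠ 1) :
    orderOf (a ^ (orderOf a / p)) = p :=
  _root_.orderOf_pow_orderOf_div (hG.isOfFinOrder (Nat.Prime.ne_zero Fact.out) a).orderOf_pos.ne'
    (hG.dvd_orderOf ha)

theorem minimal_zpowers_pow_orderOf_div (hG : IsPGroup p G) {a : G} (ha : a ≠ 1) :
    Minimal (fun K : Subgroup G => K ≠ ⊥) (zpowers (a ^ (orderOf a / p))) :=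
  minimal_zpowers_of_orderOf_prime ((hG.orderOf_pow_orderOf_div ha).symm ▸ Fact.out)

theorem pow_eq_one_of_mem_minimal (hG : IsPGroup p G) {K : Subgroup G}
    (hK : Minimal (fun K : Subgroup G => K ≠ ⊥) K) {x : G} (hx : x ∈ K) : x ^ p = 1 := by
  obtain ⟨k, hkK, hk1⟩ := K.bot_or_exists_ne_one.resolve_left hK.prop
  have hw := hG.orderOf_pow_orderOf_div hk1
  have hw1 : k ^ (orderOf k / p) ≠ 1 := fun h => by
    rw [h, orderOf_one] at hw
    exact Nat.not_prime_one (hw ▸ Fact.out)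
  rw [eq_zpowers_of_minimal hK (K.pow_mem hkK _) hw1] at hx
  exact orderOf_dvd_iff_pow_eq_one.mp (hw ▸ orderOf_dvd_of_mem_zpowers hx)

theorem minimal_eq_zpowers_of_le (hG : IsPGroup p G) {K : Subgroup G}
    (hK : Minimal (fun K : Subgroup G => K ≠ ⊥) K) {a : G} (hKa : K ≤ zpowers a) :
    K = zpowers (a ^ (orderOf a / p)) := by
  have ha : a ≠ 1 := by
    rintro rfl
    exact hK.prop (le_bot_iff.mp (zpowers_one_eq_bot (G := G) ▸ hKa))
  refine (hG.minimal_zpowers_pow_orderOf_div ha).eq_of_le hK.prop fun x hx => ?_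
  exact mem_zpowers_pow_orderOf_div_of_pow_eq_one (hG.isOfFinOrder (Nat.Prime.ne_zero Fact.out) a)
    (hG.dvd_orderOf ha) (hKa hx) (hG.pow_eq_one_of_mem_minimal hK hx)

theorem minimal_eq_of_le_zpowers (hG : IsPGroup p G) {K L : Subgroup G}
    (hK : Minimal (fun K : Subgroup G => K ≠ ⊥) K) (hL : Minimal (fun K : Subgroup G => K ≠ ⊥) L)
    {a : G} (hKa : K ≤ zpowers a) (hLa : L ≤ zpowers a) : K = L :=
  (hG.minimal_eq_zpowers_of_le hK hKa).trans (hG.minimal_eq_zpowers_of_le hL hLa).symm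

end IsPGroup

section PowerGraph

variable {G : Type*} [Group G]

theorem zpowers_le_or_le_of_powerGraph_adj {a b : G} (h : (powerGraph G).Adj a b) :
    zpowers b ≤ zpowers a ∨ zpowers a ≤ zpowers b := by
  rcases h.2 with ⟨m, -, rfl⟩ | ⟨m, -, rfl⟩
  · exact Or.inl (zpowers_le.mpr (npow_mem_zpowers a m))
  · exact Or.inr (zpowers_le.mpr (npow_mem_zpowers b m))

theorem powerGraphStar_reachable_of_mem_zpowers {a b : {g : G // g ≠ 1}} (ha : IsOfFinOrder a.1)
    (hb : b.1 ∈ zpowers a.1) : (powerGraphStar G).Reachable a b := by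
  obtain ⟨m, hm⟩ := Submonoid.mem_powers_iff _ _ |>.mp (ha.mem_powers_iff_mem_zpowers.mpr hb)
  rcases eq_or_ne a b with rfl | hab
  · rfl
  have hm0 : m ≠ 0 := by
    rintro rfl
    exact b.2 (by rw [← hm, pow_zero])
  exact SimpleGraph.Adj.reachable
    ⟨fun h => hab (Subtype.ext h), Or.inl ⟨m, Nat.pos_of_ne_zero hm0, hm.symm⟩⟩

theorem IsPGroup.le_zpowers_of_reachable {p : ℕ} [Fact p.Prime] (hG : IsPGroup p G)
    {K : Subgroup G} (hK : Minimal (fun K : Subgroup G => K ≠ ⊥) K) {a b : {g : G // g ≠ 1}}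
    (hab : (powerGraphStar G).Reachable a b) (hKa : K ≤ zpowers a.1) : K ≤ zpowers b.1 := by
  rw [SimpleGraph.reachable_iff_reflTransGen] at hab
  induction hab with
  | refl => exact hKa
  | @tail c d _ hcd ih =>
    rcases zpowers_le_or_le_of_powerGraph_adj hcd with hdc | hcd_le
    · rw [hG.minimal_eq_of_le_zpowers hK (hG.minimal_zpowers_pow_orderOf_div d.2) ih
        ((zpowers_le.mpr (npow_mem_zpowers _ _)).trans hdc)]
      exact zpowers_le.mpr (npow_mem_zpowers _ _)
    · exact ih.trans hcd_le

end PowerGraph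

theorem powerGraphStar_connected_iff_unique_minimal_general (p : ℕ) (hp : p.Prime)
    (G : Type*) [Group G] (hG : IsPGroup p G) :
    (powerGraphStar G).Connected ↔
      ∃! H : Subgroup G, Minimal (fun K : Subgroup G => K ≠ ⊥) H := by
  have := Fact.mk hp
  rw [SimpleGraph.connected_iff_exists_forall_reachable]
  constructor
  · rintro ⟨x, hx⟩
    refine ⟨_, hG.minimal_zpowers_pow_orderOf_div x.2, fun H hH => ?_⟩
    obtain ⟨h, hhH, hh1⟩ := H.bot_or_exists_ne_one.resolve_left hH.prop
    have hHx : H ≤ zpowers x.1 :=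
      hG.le_zpowers_of_reachable hH (hx ⟨h, hh1⟩).symm (eq_zpowers_of_minimal hH hhH hh1).le
    exact hG.minimal_eq_zpowers_of_le hH hHx
  · rintro ⟨H, hH, huniq⟩
    obtain ⟨h, hhH, hh1⟩ := H.bot_or_exists_ne_one.resolve_left hH.prop
    refine ⟨⟨h, hh1⟩, fun a => .symm <|
      powerGraphStar_reachable_of_mem_zpowers (hG.isOfFinOrder hp.ne_zero _) ?_⟩
    rw [← huniq _ (hG.minimal_zpowers_pow_orderOf_div a.2)] at hhH
    exact zpowers_le.mpr (npow_mem_zpowers _ _) hhH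

theorem powerGraphStar_connected_iff_unique_minimal (p : ℕ) (hp : p.Prime)
    (G : Type*) [Group G] [Fintype G] (hG : IsPGroup p G) :
    (powerGraphStar G).Connected ↔
      ∃! H : Subgroup G, Minimal (fun K : Subgroup G => K ≠ ⊥) H :=
  powerGraphStar_connected_iff_unique_minimal_general p hp G hG
end

section
/- For a finite group G, if the graph P*(G) is connected, then the prime graph (Gruenberg–Kegel graph) Γ(G) is connected. -/
def primeGraph (G : Type*) [Group G] : SimpleGraph {p : ℕ // p.Prime ∧ p ∣ Nat.card G} where
  Adj p q := p ≠ q ∧ ∃ g : G, orderOf g = p.1 * q.1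
  symm := by
    refine ⟨?_⟩
    rintro p q ⟨h, g, hg⟩
    exact ⟨h.symm, g, by rw [mul_comm]; exact hg⟩
  loopless := ⟨fun p h => h.1 rfl⟩

/-!
Every nonidentity element `g` is sent to the smallest prime factor of its order. The primes
dividing `orderOf g` form a clique of `Γ(G)`, since `g` has a power of order `p * q` for any two of
them. Adjacent elements of `P*(G)` have comparable orders, so their primes lie in one such clique;
hence the map sends paths of `P*(G)` to paths of `Γ(G)`. By Cauchy's theorem each prime of `Γ(G)`
is the order of a nonidentity element, and so lies in the component of that element's image.
-/

section

variable {G : Type*} [Group G]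

theorem powerGraph.orderOf_dvd_or_dvd_of_adj {x y : G} (hxy : (powerGraph G).Adj x y) :
    orderOf y ∣ orderOf x ∨ orderOf x ∣ orderOf y := by
  rcases hxy.2 with ⟨m, -, rfl⟩ | ⟨m, -, rfl⟩
  · exact .inl (orderOf_pow_dvd m)
  · exact .inr (orderOf_pow_dvd m)

namespace primeGraph

theorem adj_of_dvd_orderOf {g : G} (hg : IsOfFinOrder g) {p q : {p : ℕ // p.Prime ∧ p ∣ Nat.card G}}
    (hpq : p ≠ q) (hp : p.1 ∣ orderOf g) (hq : q.1 ∣ orderOf g) : (primeGraph G).Adj p q := by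
  have hcop : p.1.Coprime q.1 :=
    (Nat.coprime_primes p.2.1 q.2.1).mpr fun h => hpq (Subtype.ext h)
  exact ⟨hpq, _, orderOf_pow_orderOf_div hg.orderOf_pos.ne' (hcop.mul_dvd_of_dvd_of_dvd hp hq)⟩

theorem reachable_of_dvd_orderOf {g : G} (hg : IsOfFinOrder g)
    {p q : {p : ℕ // p.Prime ∧ p ∣ Nat.card G}} (hp : p.1 ∣ orderOf g) (hq : q.1 ∣ orderOf g) :
    (primeGraph G).Reachable p q := by
  rcases eq_or_ne p q with rfl | hpq
  · rfl
  · exact (adj_of_dvd_orderOf hg hpq hp hq).reachable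

noncomputable def minFacOrderOf (g : {g : G // g ≠ 1}) : {p : ℕ // p.Prime ∧ p ∣ Nat.card G} :=
  ⟨(orderOf g.1).minFac, Nat.minFac_prime (orderOf_eq_one_iff.not.mpr g.2),
    (Nat.minFac_dvd _).trans (orderOf_dvd_natCard g.1)⟩

theorem minFacOrderOf_dvd_orderOf (g : {g : G // g ≠ 1}) : (minFacOrderOf g).1 ∣ orderOf g.1 :=
  Nat.minFac_dvd _

variable [Finite G]

theorem reachable_minFacOrderOf_of_adj {g h : {g : G // g ≠ 1}} (hgh : (powerGraphStar G).Adj g h) :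
    (primeGraph G).Reachable (minFacOrderOf g) (minFacOrderOf h) := by
  rcases powerGraph.orderOf_dvd_or_dvd_of_adj hgh with hhg | hgh
  · exact reachable_of_dvd_orderOf (isOfFinOrder_of_finite g.1) (minFacOrderOf_dvd_orderOf g)
      ((minFacOrderOf_dvd_orderOf h).trans hhg)
  · exact reachable_of_dvd_orderOf (isOfFinOrder_of_finite h.1)
      ((minFacOrderOf_dvd_orderOf g).trans hgh) (minFacOrderOf_dvd_orderOf h)

theorem reachable_minFacOrderOf_of_reachable {g h : {g : G // g ≠ 1}}
    (hgh : (powerGraphStar G).Reachable g h) :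
    (primeGraph G).Reachable (minFacOrderOf g) (minFacOrderOf h) := by
  rw [SimpleGraph.reachable_iff_reflTransGen] at hgh
  induction hgh with
  | refl => rfl
  | tail _ hadj ih => exact ih.trans (reachable_minFacOrderOf_of_adj hadj)

theorem exists_reachable_minFacOrderOf (p : {p : ℕ // p.Prime ∧ p ∣ Nat.card G}) :
    ∃ g : {g : G // g ≠ 1}, (primeGraph G).Reachable p (minFacOrderOf g) := by
  have : Fact p.1.Prime := ⟨p.2.1⟩
  obtain ⟨g, hg⟩ := exists_prime_orderOf_dvd_card' p.1 p.2.2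
  have hg1 : g ≠ 1 := fun h => p.2.1.ne_one (by rw [← hg, h, orderOf_one])
  exact ⟨⟨g, hg1⟩, reachable_of_dvd_orderOf (isOfFinOrder_of_finite g) (dvd_of_eq hg.symm)
    (minFacOrderOf_dvd_orderOf _)⟩

end primeGraph

end

open primeGraph in
theorem primeGraph_connected_of_powerGraphStar_connected (G : Type*) [Group G] [Fintype G]
    (h : (powerGraphStar G).Connected) : (primeGraph G).Connected := by
  have : Nonempty {p : ℕ // p.Prime ∧ p ∣ Nat.card G} := h.nonempty.map minFacOrderOf
  refine ⟨fun p q => ?_⟩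
  obtain ⟨a, hpa⟩ := exists_reachable_minFacOrderOf p
  obtain ⟨b, hqb⟩ := exists_reachable_minFacOrderOf q
  exact hpa.trans ((reachable_minFacOrderOf_of_reachable (h.preconnected a b)).trans hqb.symm)
end

section
/- Let G be a nontrivial finite group. Then P*(G) is a bipartite graph if and only if every element of G has order 1, 2, or 3. -/
/-!
An element `g` of order `0` or at least `4` spans a triangle of `P*(G)`: `g, g², g⁴` if `g`
has infinite order, `g, g⁻¹, g²` otherwise. Conversely, if every element has order at most `3`,
the only nonidentity power of `x` other than `x` is `x⁻¹`, so every edge of `P*(G)` is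
`{x, x⁻¹}` and colouring `x` by whether `x < x⁻¹` (for any linear order on the vertices) is
proper.
-/

namespace SimpleGraph

variable {V : Type*} [LinearOrder V]

lemma colorable_two_of_adj_eq_apply (Γ : SimpleGraph V) (σ : V → V)
    (hσ : ∀ ⦃x y⦄, Γ.Adj x y → y = σ x) : Γ.Colorable 2 :=
  IsBipartiteWith.isBipartite (s := {x | x < σ x}) (t := {x | x < σ x}ᶜ)
    { disjoint := disjoint_compl_right
      mem_of_adj := fun x y hxy => by
        have hyx : σ y = x := (hσ hxy.symm).symm
        simp only [Set.mem_ofPred_eq, Set.mem_compl_iff, ← hσ hxy, hyx, not_lt]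
        rcases hxy.ne.lt_or_gt with h | h
        · exact .inl ⟨h, h.le⟩
        · exact .inr ⟨h.le, h⟩ }

end SimpleGraph

section

variable {G : Type*} [Group G]

lemma powerGraph_adj_pow_pow {x : G} {a b : ℕ} (hb : 0 < b) (hab : a ∣ b)
    (hne : x ^ a ≠ x ^ b) : (powerGraph G).Adj (x ^ a) (x ^ b) := by
  obtain ⟨k, rfl⟩ := hab
  exact ⟨hne, .inl ⟨k, Nat.pos_of_mul_pos_left hb, pow_mul x a k⟩⟩

lemma IsOfFinOrder.powerGraph_adj_zpow {x : G} (hx : IsOfFinOrder x) {k : ℤ} (hne : x ≠ x ^ k) :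
    (powerGraph G).Adj x (x ^ k) := by
  obtain ⟨m, hm : x ^ m = x ^ k⟩ :=
    hx.mem_powers_iff_mem_zpowers.2 (Subgroup.zpow_mem_zpowers x k)
  refine ⟨hne, .inl ⟨m + orderOf x, by have := hx.orderOf_pos; omega, ?_⟩⟩
  rw [pow_add, pow_orderOf_eq_one, mul_one, hm]

lemma powerGraphStar_not_cliqueFree_three {a b c : G} (ha : a ≠ 1) (hb : b ≠ 1) (hc : c ≠ 1)
    (hab : (powerGraph G).Adj a b) (hac : (powerGraph G).Adj a c)
    (hbc : (powerGraph G).Adj b c) : ¬ (powerGraphStar G).CliqueFree 3 := by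
  classical
  have htriangle : (powerGraphStar G).IsNClique 3 {⟨a, ha⟩, ⟨b, hb⟩, ⟨c, hc⟩} :=
    SimpleGraph.is3Clique_triple_iff.2 ⟨hab, hac, hbc⟩
  exact fun hfree => hfree _ htriangle

lemma powerGraphStar_not_cliqueFree_three_of_not_isOfFinOrder {g : G} (hg : ¬ IsOfFinOrder g) :
    ¬ (powerGraphStar G).CliqueFree 3 := by
  have hne : ∀ {m n : ℕ}, m ≠ n → g ^ m ≠ g ^ n :=
    fun h heq => h (injective_pow_iff_not_isOfFinOrder.2 hg heq)
  have hne_one : ∀ {n : ℕ}, n ≠ 0 → g ^ n ≠ 1 := fun h => pow_zero g ▸ hne h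
  exact powerGraphStar_not_cliqueFree_three (hne_one one_ne_zero) (hne_one two_ne_zero)
    (hne_one four_ne_zero) (powerGraph_adj_pow_pow two_pos (by norm_num) (hne (by norm_num)))
    (powerGraph_adj_pow_pow four_pos (by norm_num) (hne (by norm_num)))
    (powerGraph_adj_pow_pow four_pos (by norm_num) (hne (by norm_num)))

lemma IsOfFinOrder.powerGraphStar_not_cliqueFree_three {g : G} (hg : IsOfFinOrder g)
    (h2 : g ^ 2 ≠ 1) (h3 : g ^ 3 ≠ 1) : ¬ (powerGraphStar G).CliqueFree 3 := by
  have h1 : g ≠ 1 := by rintro rfl; simp at h2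
  have hg_sq : g ≠ g ^ 2 := fun h => h1 (by simpa [pow_two] using h.symm)
  have hg_inv : g ≠ g⁻¹ := fun h => h2 (by rw [pow_two, mul_eq_one_iff_eq_inv]; exact h)
  have hinv_sq : g⁻¹ ≠ g ^ 2 := fun h => h3 (by rw [pow_succ, ← h, inv_mul_cancel])
  refine _root_.powerGraphStar_not_cliqueFree_three h1 (inv_ne_one.2 h1) h2
    ?_ ⟨hg_sq, .inl ⟨2, two_pos, rfl⟩⟩ ?_
  · simpa using hg.powerGraph_adj_zpow (k := -1) (by simpa using hg_inv)
  · simpa using hg.inv.powerGraph_adj_zpow (k := -2) (by simpa using hinv_sq)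

lemma orderOf_eq_one_or_two_or_three_of_cliqueFree (h : (powerGraphStar G).CliqueFree 3) (g : G) :
    orderOf g = 1 ∨ orderOf g = 2 ∨ orderOf g = 3 := by
  by_cases hg : IsOfFinOrder g
  · by_cases h2 : g ^ 2 = 1
    · have := (Nat.dvd_prime Nat.prime_two).1 (orderOf_dvd_of_pow_eq_one h2)
      tauto
    by_cases h3 : g ^ 3 = 1
    · have := (Nat.dvd_prime Nat.prime_three).1 (orderOf_dvd_of_pow_eq_one h3)
      tauto
    exact absurd h (hg.powerGraphStar_not_cliqueFree_three h2 h3)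
  · exact absurd h (powerGraphStar_not_cliqueFree_three_of_not_isOfFinOrder hg)

lemma pow_eq_inv_of_orderOf_le_three {x : G} (hpos : 0 < orderOf x) (hle : orderOf x ≤ 3)
    {m : ℕ} (h1 : x ^ m ≠ 1) (hx : x ^ m ≠ x) : x ^ m = x⁻¹ := by
  have hlt := Nat.mod_lt m hpos
  have hlt3 : m % orderOf x < 3 := by omega
  rw [← pow_mod_orderOf] at h1 hx ⊢
  interval_cases hm : m % orderOf x
  · exact absurd (pow_zero x) h1
  · exact absurd (pow_one x) hx
  · have h3 : orderOf x = 3 := by omega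
    have hx3 : x ^ 3 = 1 := h3 ▸ pow_orderOf_eq_one x
    exact eq_inv_of_mul_eq_one_left (by rwa [← pow_succ])

lemma eq_inv_of_powerGraph_adj (h : ∀ g : G, orderOf g = 1 ∨ orderOf g = 2 ∨ orderOf g = 3)
    {x y : G} (hx : x ≠ 1) (hy : y ≠ 1) (hxy : (powerGraph G).Adj x y) : y = x⁻¹ := by
  obtain ⟨hne, ⟨m, -, rfl⟩ | ⟨m, -, rfl⟩⟩ := hxy
  · have := h x
    exact pow_eq_inv_of_orderOf_le_three (by omega) (by omega) hy (Ne.symm hne)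
  · have := h y
    exact inv_eq_iff_eq_inv.1 (pow_eq_inv_of_orderOf_le_three (by omega) (by omega) hx hne).symm

end

theorem powerGraphStar_bipartite_iff_general (G : Type*) [Group G] :
    (powerGraphStar G).Colorable 2 ↔
      ∀ g : G, orderOf g = 1 ∨ orderOf g = 2 ∨ orderOf g = 3 := by
  refine ⟨fun hcol => orderOf_eq_one_or_two_or_three_of_cliqueFree
    (hcol.cliqueFree (by norm_num)), fun h => ?_⟩
  let _ := IsWellOrder.linearOrder (WellOrderingRel (α := {g : G // g ≠ 1}))
  exact (powerGraphStar G).colorable_two_of_adj_eq_apply (fun x => ⟨x⁻¹, inv_ne_one.2 x.2⟩)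
    fun x y hxy => Subtype.ext (eq_inv_of_powerGraph_adj h x.2 y.2 hxy)

theorem powerGraphStar_bipartite_iff (G : Type*) [Group G] [Fintype G] [Nontrivial G] :
    (powerGraphStar G).Colorable 2 ↔
      ∀ g : G, orderOf g = 1 ∨ orderOf g = 2 ∨ orderOf g = 3 :=
  powerGraphStar_bipartite_iff_general G
end

section
/- Let G be a nontrivial finite group. Then P*(G) is a tree if and only if G is cyclic of order 2 or cyclic of order 3. -/
open Subgroup SimpleGraph

lemma SimpleGraph.Reachable.eq_of_forall_adj {V β : Type*} {H : SimpleGraph V} {f : V → β}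
    (hf : ∀ u v, H.Adj u v → f u = f v) {u v : V} (h : H.Reachable u v) : f u = f v := by
  obtain ⟨w⟩ := h
  induction w with
  | nil => rfl
  | cons hadj _ ih => exact (hf _ _ hadj).trans ih

lemma SimpleGraph.isTree_top_of_card_le_two {V : Type*} [Nonempty V] (h : ENat.card V ≤ 2) :
    (⊤ : SimpleGraph V).IsTree :=
  ⟨connected_top, .of_card_le_two h⟩

section

variable {G : Type*} [Group G]

lemma orderOf_le_three_of_isAcyclic (h : (powerGraphStar G).IsAcyclic) (g : G) :
    orderOf g ≤ 3 := by
  classical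
  by_contra! hg
  set n := orderOf g
  have hinv : g⁻¹ = g ^ (n - 1) := by
    rw [pow_sub g (by omega), pow_orderOf_eq_one, one_mul, pow_one]
  have hsq : g ^ 2 = g⁻¹ ^ (n - 2) := by
    rw [inv_pow, pow_sub g (by omega), pow_orderOf_eq_one, one_mul, inv_inv]
  have hne : ∀ k < n, ∀ l < n, k ≠ l → g ^ k ≠ g ^ l := fun k hk l hl hkl e =>
    hkl (pow_injOn_Iio_orderOf (Set.mem_Iio.mpr hk) (Set.mem_Iio.mpr hl) e)
  have h01 : g ≠ 1 := by simpa using hne 1 (by omega) 0 (by omega) one_ne_zero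
  have h02 : g ^ 2 ≠ 1 := by simpa using hne 2 (by omega) 0 (by omega) two_ne_zero
  have h12 : g ≠ g ^ 2 := by simpa using hne 1 (by omega) 2 (by omega) (by omega)
  have h13 : g ≠ g⁻¹ := by simpa [hinv] using hne 1 (by omega) (n - 1) (by omega) (by omega)
  have h23 : g ^ 2 ≠ g⁻¹ := by simpa [hinv] using hne 2 (by omega) (n - 1) (by omega) (by omega)
  let a : {g : G // g ≠ 1} := ⟨g, h01⟩
  let b : {g : G // g ≠ 1} := ⟨g ^ 2, h02⟩
  let c : {g : G // g ≠ 1} := ⟨g⁻¹, inv_ne_one.mpr h01⟩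
  refine h.cliqueFree le_rfl {a, b, c} (is3Clique_triple_iff.mpr ⟨?_, ?_, ?_⟩)
  · exact ⟨h12, .inl ⟨2, two_pos, rfl⟩⟩
  · exact ⟨h13, .inl ⟨n - 1, by omega, hinv⟩⟩
  · exact ⟨h23, .inr ⟨n - 2, by omega, hsq⟩⟩

lemma zpowers_pow_eq_of_prime_orderOf {g : G} (hg : (orderOf g).Prime) {k : ℕ} (hk : g ^ k ≠ 1) :
    zpowers (g ^ k) = zpowers g := by
  refine le_antisymm (zpowers_le.mpr (pow_mem (mem_zpowers g) k)) (zpowers_le.mpr ?_)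
  refine mem_zpowers_pow_iff.mpr (Nat.Coprime.symm ?_)
  exact (hg.coprime_iff_not_dvd).mpr fun hdvd => hk (orderOf_dvd_iff_pow_eq_one.mp hdvd)

lemma zpowers_eq_of_powerGraph_adj {x y : G} (hx : (orderOf x).Prime) (hy : (orderOf y).Prime)
    (hxy : (powerGraph G).Adj x y) : zpowers x = zpowers y := by
  have ne_one {g : G} (hg : (orderOf g).Prime) : g ≠ 1 :=
    fun h => hg.ne_one (orderOf_eq_one_iff.mpr h)
  obtain ⟨-, ⟨m, -, rfl⟩ | ⟨m, -, rfl⟩⟩ := hxy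
  · exact (zpowers_pow_eq_of_prime_orderOf hx (ne_one hy)).symm
  · exact zpowers_pow_eq_of_prime_orderOf hy (ne_one hx)

lemma zpowers_eq_top_of_connected (hconn : (powerGraphStar G).Connected)
    (hprime : ∀ g : G, g ≠ 1 → (orderOf g).Prime) {x : G} (hx : x ≠ 1) : zpowers x = ⊤ := by
  refine eq_top_iff' _ |>.mpr fun g => ?_
  by_cases hg : g = 1
  · exact hg ▸ one_mem _
  have := (hconn.preconnected ⟨g, hg⟩ ⟨x, hx⟩).eq_of_forall_adj
    (f := fun u : {g : G // g ≠ 1} => zpowers (u : G))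
    fun u v huv => zpowers_eq_of_powerGraph_adj (hprime u u.2) (hprime v v.2) huv
  exact this ▸ mem_zpowers g

lemma prime_orderOf_of_isAcyclic [Finite G] (h : (powerGraphStar G).IsAcyclic) {g : G}
    (hg : g ≠ 1) : (orderOf g).Prime := by
  have h1 : orderOf g ≠ 1 := mt orderOf_eq_one_iff.mp hg
  have h3 := orderOf_le_three_of_isAcyclic h g
  have h0 := orderOf_pos g
  interval_cases orderOf g <;> norm_num at *

lemma powerGraphStar_eq_top_of_prime_card (hp : (Nat.card G).Prime) : powerGraphStar G = ⊤ := by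
  have := Fact.mk hp
  ext u v
  refine ⟨fun h => h.ne, fun huv => ⟨Subtype.coe_ne_coe.mpr huv, .inl ?_⟩⟩
  obtain ⟨m, hm⟩ :=
    (Submonoid.mem_powers_iff _ _).mp (mem_powers_of_prime_card rfl u.2 (g' := (v : G)))
  refine ⟨m, Nat.pos_of_ne_zero ?_, hm.symm⟩
  rintro rfl
  exact v.2 (hm.symm.trans (pow_zero _))

lemma isTree_powerGraphStar_of_prime_card [Fintype G] (hp : (Fintype.card G).Prime)
    (h3 : Fintype.card G ≤ 3) : (powerGraphStar G).IsTree := by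
  classical
  rw [powerGraphStar_eq_top_of_prime_card (Nat.card_eq_fintype_card (α := G) ▸ hp)]
  have : Nontrivial G := Fintype.one_lt_card_iff_nontrivial.mp hp.one_lt
  obtain ⟨x, hx⟩ := exists_ne (1 : G)
  have : Nonempty {g : G // g ≠ 1} := ⟨⟨x, hx⟩⟩
  have hcard : Fintype.card {g : G // g ≠ 1} = Fintype.card G - 1 := Set.card_ne_eq 1
  refine isTree_top_of_card_le_two ?_
  rw [ENat.card_eq_coe_fintype_card, hcard]
  exact_mod_cast (by omega : Fintype.card G - 1 ≤ 2)

end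

theorem powerGraphStar_isTree_iff_general (G : Type*) [Group G] [Fintype G] :
    (powerGraphStar G).IsTree ↔
      IsCyclic G ∧ (Fintype.card G = 2 ∨ Fintype.card G = 3) := by
  constructor
  · intro h
    obtain ⟨⟨x, hx⟩⟩ := h.connected.nonempty
    have htop : zpowers x = ⊤ := zpowers_eq_top_of_connected h.connected
      (fun _ hg => prime_orderOf_of_isAcyclic h.isAcyclic hg) hx
    have hcard : Fintype.card G = orderOf x := by
      rw [← Nat.card_eq_fintype_card, ← Nat.card_zpowers, htop, Subgroup.card_top]
    have h2 := (prime_orderOf_of_isAcyclic h.isAcyclic hx).two_le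
    have h3 := orderOf_le_three_of_isAcyclic h.isAcyclic x
    exact ⟨isCyclic_iff_exists_zpowers_eq_top.mpr ⟨x, htop⟩, by omega⟩
  · rintro ⟨-, hcard⟩
    refine isTree_powerGraphStar_of_prime_card ?_ (by omega)
    rcases hcard with h | h <;> rw [h] <;> norm_num

theorem powerGraphStar_isTree_iff (G : Type*) [Group G] [Fintype G] [Nontrivial G] :
    (powerGraphStar G).IsTree ↔
      IsCyclic G ∧ (Fintype.card G = 2 ∨ Fintype.card G = 3) :=
  powerGraphStar_isTree_iff_general G
end

section
/- Let G be a nontrivial finite group. If P*(G) is planar, then every element of G has order at most 6 and no element has order 10 or 12; equivalently the set of element orders is contained in {1, 2, 3, 4, 5, 6}. -/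
/-- `Γ` contains a subdivision of `H`: there are branch vertices (an injection of the
vertices of `H`) and internally disjoint paths joining the images of the endpoints of
each edge of `H`, whose internal vertices are new. -/
def HasSubdivision {V W : Type*} (Γ : SimpleGraph V) (H : SimpleGraph W) : Prop :=
  ∃ (f : W ↪ V) (p : ∀ a b : W, H.Adj a b → Γ.Walk (f a) (f b)),
    (∀ a b (h : H.Adj a b), (p a b h).IsPath) ∧
    (∀ a b (h : H.Adj a b), ∀ v ∈ (p a b h).support,
      v ∈ Set.range f → v = f a ∨ v = f b) ∧
    (∀ a b c d (h₁ : H.Adj a b) (h₂ : H.Adj c d), s(a, b) ≠ s(c, d) →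
      ∀ v, v ∈ (p a b h₁).support → v ∈ (p c d h₂).support →
        (v = f a ∨ v = f b) ∧ (v = f c ∨ v = f d))

/-- Planarity via Kuratowski's theorem: no subdivision of `K₅` or `K₃,₃`. -/
def IsPlanar {V : Type*} (Γ : SimpleGraph V) : Prop :=
  ¬ HasSubdivision Γ (SimpleGraph.completeGraph (Fin 5)) ∧
    ¬ HasSubdivision Γ (completeBipartiteGraph (Fin 3) (Fin 3))

open SimpleGraph Finset Nat

theorem HasSubdivision.of_isContained {V W : Type*} {Γ : SimpleGraph V} {H : SimpleGraph W}
    (h : H ⊑ Γ) : HasSubdivision Γ H := by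
  obtain ⟨f⟩ := h
  have hadj {a b : W} (hab : H.Adj a b) : Γ.Adj (f a) (f b) := f.toHom.map_adj hab
  have hsupp {a b : W} (hab : H.Adj a b) {v : V} (hv : v ∈ (hadj hab).toWalk.support) :
      v = f a ∨ v = f b := by
    simpa only [Adj.support_toWalk, List.mem_cons, List.mem_singleton, List.not_mem_nil,
      or_false] using hv
  exact ⟨⟨f, f.injective⟩, fun a b hab => (hadj hab).toWalk,
    fun a b hab => (hadj hab).isPath_toWalk,
    fun a b hab v hv _ => hsupp hab hv,
    fun a b c d hab hcd _ v hv₁ hv₂ => ⟨hsupp hab hv₁, hsupp hcd hv₂⟩⟩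

theorem IsPlanar.cliqueFree_five {V : Type*} {Γ : SimpleGraph V} (h : IsPlanar Γ) :
    Γ.CliqueFree 5 := by
  by_contra hK
  exact h.1 (.of_isContained ((not_cliqueFree_iff_top_isContained 5).mp hK))

theorem not_cliqueFree_induce_of_isNClique {V : Type*} {Γ : SimpleGraph V} {S : Set V}
    {t : Finset V} {k : ℕ} (ht : Γ.IsNClique k t) (htS : ∀ v ∈ t, v ∈ S) :
    ¬(Γ.induce S).CliqueFree k := by
  classical
  refine IsNClique.not_cliqueFree (s := t.subtype (· ∈ S)) ?_
  rwa [isNClique_induce_iff, subtype_map_of_mem htS]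

theorem Nat.four_le_totient_of_odd {n : ℕ} (hn : 5 ≤ n) (hodd : Odd n) : 4 ≤ φ n := by
  have hsub : ({1, 2, n - 1} : Finset ℕ) ⊆ {a ∈ range n | n.Coprime a} := by
    intro a ha
    simp only [mem_insert, mem_singleton] at ha
    rcases ha with rfl | rfl | rfl
    · simp only [mem_filter, mem_range, coprime_one_right_iff, and_true]; omega
    · simp only [mem_filter, mem_range, coprime_two_right, hodd, and_true]; omega
    · simp only [mem_filter, mem_range, coprime_self_sub_right (by omega : 1 ≤ n),
        coprime_one_right_iff, and_true]; omega
  have hcard : #({1, 2, n - 1} : Finset ℕ) = 3 :=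
    card_eq_three.mpr ⟨1, 2, n - 1, by omega, by omega, by omega, rfl⟩
  have h3 : 3 ≤ φ n := hcard ▸ card_le_card hsub
  obtain ⟨k, hk⟩ := totient_even (n := n) (by omega)
  omega

theorem Nat.four_le_totient {n : ℕ} (hn : 7 ≤ n) : 4 ≤ φ n := by
  obtain ⟨m, rfl | rfl⟩ := even_or_odd' n
  · rcases even_or_odd m with hm | hm
    · obtain ⟨k, hk⟩ := totient_even (n := m) (by omega)
      have : 0 < φ m := totient_pos.mpr (by omega)
      rw [totient_two_mul_of_even hm]
      omega
    · rw [totient_two_mul_of_odd hm]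
      exact four_le_totient_of_odd (by obtain ⟨k, rfl⟩ := hm; omega) hm
  · exact four_le_totient_of_odd (by omega) (odd_two_mul_add_one m)

section PowerGraph

variable {G : Type*} [Group G]

theorem powerGraph_adj_of_eq_pow {y z : G} (hy : IsOfFinOrder y) (hne : y ≠ z) {m : ℕ}
    (hz : z = y ^ m) : (powerGraph G).Adj y z := by
  refine ⟨hne, Or.inl ⟨m + orderOf y, by have := hy.orderOf_pos; omega, ?_⟩⟩
  rw [pow_add, pow_orderOf_eq_one, mul_one, hz]

theorem powerGraph_adj_pow_of_coprime {x : G} (hx : IsOfFinOrder x) {k j : ℕ}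
    (hk : k.Coprime (orderOf x)) (hne : x ^ k ≠ x ^ j) : (powerGraph G).Adj (x ^ k) (x ^ j) := by
  obtain ⟨m, hm⟩ := exists_pow_eq_self_of_coprime hk
  exact powerGraph_adj_of_eq_pow hx.pow hne (m := m * j) (by rw [pow_mul, hm])

theorem powerGraph_isClique_image_pow {x : G} (hx : IsOfFinOrder x) {s : Set ℕ}
    (hs : s.Pairwise fun a b => a.Coprime (orderOf x) ∨ b.Coprime (orderOf x)) :
    (powerGraph G).IsClique ((x ^ ·) '' s) := by
  rintro _ ⟨a, ha, rfl⟩ _ ⟨b, hb, rfl⟩ hne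
  rcases hs ha hb (fun hab => hne (congrArg _ hab)) with hcop | hcop
  · exact powerGraph_adj_pow_of_coprime hx hcop hne
  · exact (powerGraph_adj_pow_of_coprime hx hcop hne.symm).symm

theorem powerGraphStar_not_cliqueFree_five {x : G} (htot : 4 ≤ φ (orderOf x))
    (hx : 6 ≤ orderOf x) : ¬(powerGraphStar G).CliqueFree 5 := by
  classical
  set n := orderOf x
  obtain ⟨A, hAsub, hAcard⟩ := exists_subset_card_eq (s := {a ∈ range n | n.Coprime a}) htot
  have hA : ∀ a ∈ A, a.Coprime n ∧ 0 < a ∧ a < n := by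
    intro a ha
    obtain ⟨ha, hcop⟩ := mem_filter.mp (hAsub ha)
    refine ⟨hcop.symm, Nat.pos_of_ne_zero ?_, mem_range.mp ha⟩
    rintro rfl
    rw [coprime_zero_right] at hcop
    omega
  obtain ⟨j, hj, hjA⟩ := exists_mem_notMem_of_card_lt_card (s := A) (t := Ioo 0 n)
    (by rw [Nat.card_Ioo]; omega)
  have hs : ∀ a ∈ insert j A, 0 < a ∧ a < n := by
    intro a ha
    rcases mem_insert.mp ha with rfl | ha
    exacts [mem_Ioo.mp hj, (hA a ha).2]
  have hcop : (insert j A : Set ℕ).Pairwise fun a b => a.Coprime n ∨ b.Coprime n := by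
    rintro a (rfl | ha) b (rfl | hb) hab
    exacts [absurd rfl hab, Or.inr (hA b hb).1, Or.inl (hA a ha).1, Or.inl (hA a ha).1]
  have hinj : Set.InjOn (x ^ ·) (insert j A : Finset ℕ) :=
    pow_injOn_Iio_orderOf.mono fun a ha => (hs a ha).2
  refine not_cliqueFree_induce_of_isNClique (t := (insert j A).image (x ^ ·)) ⟨?_, ?_⟩ ?_
  · rw [coe_image, coe_insert]
    exact powerGraph_isClique_image_pow (orderOf_pos_iff.mp (by omega)) hcop
  · rw [Finset.card_image_of_injOn hinj, card_insert_of_notMem hjA, hAcard]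
  · simp only [mem_image]
    rintro _ ⟨a, ha, rfl⟩
    exact pow_ne_one_of_lt_orderOf (hs a ha).1.ne' (hs a ha).2

end PowerGraph

theorem orders_le_six_of_planar_general (G : Type*) [Group G] [Fintype G]
    (h : IsPlanar (powerGraphStar G)) :
    ∀ g : G, orderOf g ∈ ({1, 2, 3, 4, 5, 6} : Set ℕ) := by
  intro g
  by_contra hg
  have h7 : 7 ≤ orderOf g := by
    have := orderOf_pos g
    simp only [Set.mem_insert_iff, Set.mem_singleton_iff] at hg
    omega
  exact powerGraphStar_not_cliqueFree_five (four_le_totient h7) (by omega) h.cliqueFree_five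

theorem orders_le_six_of_planar (G : Type*) [Group G] [Fintype G] [Nontrivial G]
    (h : IsPlanar (powerGraphStar G)) :
    ∀ g : G, orderOf g ∈ ({1, 2, 3, 4, 5, 6} : Set ℕ) :=
  orders_le_six_of_planar_general G h
end
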